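/- Let S be a ring with approximate unit, A an S-algebra with approximate unit, and M a non-degenerate (A,A)-bimodule. The map d: A → Ω¹_S A sending a to e_i ⊗ [a] (for any e_i with e_i a = a = a e_i) is a universal S-derivation: composition with d gives a bijection Hom_{(A,A)}(Ω¹_S A, M) ≅ Der_S(A, M). -/

import Mathlib

/-! A bimodule map `F` with `F ∘ d = D` is determined on generators: if `φ (e i) * b = b`, the
`S`-balancing relation gives `a ⊗ [b] = a φ(e i) ⊗ [b] = a · d b`, so `F (a ⊗ [b]) = a · D b`.
Conversely `a ⊗ [b] ↦ a · D b` is well defined on `A ⊗_S (A/S)` because `D` kills `S`, hence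
`D (φ s * b) = φ s · D b`; the Leibniz rule makes it a bimodule map, and
`e_i · D a = D (e_i a) = D a`. -/

open TensorProduct

section CuntzQuillen

variable (S A : Type*) [NonUnitalRing S] [NonUnitalRing A] (φ : S →ₙ+* A)

/-- The image of `S` in `A`, as a `ℤ`-submodule. -/
def imageOfS : Submodule ℤ A := Submodule.span ℤ (Set.range φ)

/-- The relations defining `Ω¹_S A = A ⊗_S (A/S)` as a quotient of `A ⊗[ℤ] (A/S)`. -/
def omegaRel : Submodule ℤ (A ⊗[ℤ] (A ⧸ imageOfS S A φ)) :=
  Submodule.span ℤ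
    {x | ∃ (s : S) (a b : A),
      x = (a * φ s) ⊗ₜ[ℤ] (Submodule.Quotient.mk b)
        - a ⊗ₜ[ℤ] (Submodule.Quotient.mk (φ s * b) : A ⧸ imageOfS S A φ)}

/-- `Ω¹_S A = A ⊗_S (A/S)`, the bimodule of differential forms of degree one. -/
def omegaSA := (A ⊗[ℤ] (A ⧸ imageOfS S A φ)) ⧸ omegaRel S A φ

noncomputable instance : AddCommGroup (omegaSA S A φ) :=
  inferInstanceAs (AddCommGroup ((A ⊗[ℤ] (A ⧸ imageOfS S A φ)) ⧸ omegaRel S A φ))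

/-- class of `a ⊗ [b]` in `Ω¹_S A` -/
noncomputable def mkO (a b : A) : omegaSA S A φ :=
  Submodule.Quotient.mk (a ⊗ₜ[ℤ] (Submodule.Quotient.mk b : A ⧸ imageOfS S A φ))

section Universal

variable {S A φ} {M : Type*} [AddCommGroup M]

theorem mkO_mul_map (a : A) (s : S) (b : A) :
    mkO S A φ (a * φ s) b = mkO S A φ a (φ s * b) :=
  (Submodule.Quotient.eq _).2 (Submodule.subset_span ⟨s, a, b, rfl⟩)

theorem mkO_eq_mkO_mul_of_mul_eq {s : S} {b : A} (hb : φ s * b = b) (a : A) :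
    mkO S A φ a b = mkO S A φ (a * φ s) b := by
  rw [mkO_mul_map, hb]

theorem omegaSA.addMonoidHom_ext {F G : omegaSA S A φ →+ M}
    (h : ∀ a b, F (mkO S A φ a b) = G (mkO S A φ a b)) : F = G :=
  AddMonoidHom.toIntLinearMap_injective <| Submodule.linearMap_qext _ <|
    TensorProduct.ext' fun a q => by
      obtain ⟨b, rfl⟩ := Submodule.mkQ_surjective _ q
      exact h a b

noncomputable def omegaSA.lift (f : A →+ A →+ M) (hS : ∀ a s, f a (φ s) = 0)
    (hbal : ∀ a s b, f (a * φ s) b = f a (φ s * b)) : omegaSA S A φ →+ M :=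
  let g : A →+ (A ⧸ imageOfS S A φ) →+ M :=
    ((imageOfS S A φ).liftQ f.flip.toIntLinearMap (by
      rw [imageOfS, Submodule.span_le]
      rintro _ ⟨s, rfl⟩
      ext a
      exact hS a s)).toAddMonoidHom.flip
  let t := TensorProduct.liftAddHom g fun n a q => by
    rw [map_zsmul, map_zsmul, AddMonoidHom.smul_apply]
  ((omegaRel S A φ).liftQ t.toIntLinearMap (by
    rw [omegaRel, Submodule.span_le]
    rintro _ ⟨s, a, b, rfl⟩
    simp only [SetLike.mem_coe, LinearMap.mem_ker, map_sub]
    exact sub_eq_zero.2 (hbal a s b))).toAddMonoidHom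

theorem omegaSA.lift_mkO (f : A →+ A →+ M) (hS : ∀ a s, f a (φ s) = 0)
    (hbal : ∀ a s b, f (a * φ s) b = f a (φ s * b)) (a b : A) :
    omegaSA.lift f hS hbal (mkO S A φ a b) = f a b :=
  rfl

def AddMonoidHom.ofBiadditive {N : Type*} [AddZeroClass N] (l : N → M → M)
    (hladd : ∀ a m m', l a (m + m') = l a m + l a m')
    (hladd' : ∀ a a' m, l (a + a') m = l a m + l a' m) : N →+ M →+ M :=
  AddMonoidHom.mk' (fun a => AddMonoidHom.mk' (l a) (hladd a)) fun a a' =>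
    AddMonoidHom.ext (hladd' a a')

end Universal

theorem omega_universal_derivation
    (I : Type*) (e : I → S)
    (happroxA : ∀ a : A, ∃ i, φ (e i) * a = a ∧ a * φ (e i) = a)
    -- `M` is an `(A,A)`-bimodule:
    (M : Type*) [AddCommGroup M] (l : A → M → M) (r : M → A → M)
    (hladd : ∀ a m m', l a (m + m') = l a m + l a m')
    (hladd' : ∀ a a' m, l (a + a') m = l a m + l a' m)
    (hradd : ∀ m m' a, r (m + m') a = r m a + r m' a)
    (hlmul : ∀ a b m, l (a * b) m = l a (l b m))
    (hlr : ∀ a m b, r (l a m) b = l a (r m b))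
    -- `D` is an `S`-derivation:
    (D : A →+ M)
    (hD : ∀ a b : A, D (a * b) = r (D a) b + l a (D b))
    (hDS : ∀ s : S, D (φ s) = 0) :
    ∃! F : omegaSA S A φ →+ M,
      -- `F` is a map of `(A,A)`-bimodules for the Leibniz structure on `Ω¹_S A`:
      (∀ c a b : A, F (mkO S A φ (c * a) b) = l c (F (mkO S A φ a b))) ∧
      (∀ d a b : A,
        F (mkO S A φ a (b * d)) - F (mkO S A φ (a * b) d)
          = r (F (mkO S A φ a b)) d) ∧
      -- `F ∘ d = D`, where `d a = e_i ⊗ [a]`: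
      (∀ (a : A) (i : I), (φ (e i) * a = a ∧ a * φ (e i) = a) →
        F (mkO S A φ (φ (e i)) a) = D a) := by
  have r_zero : ∀ b, r 0 b = 0 := fun b => (AddMonoidHom.mk' (r · b) (hradd · · b)).map_zero
  have D_mul_left : ∀ s b, D (φ s * b) = l (φ s) (D b) := fun s b => by
    rw [hD, hDS, r_zero, zero_add]
  let lD := (AddMonoidHom.ofBiadditive l hladd hladd').compl₂ D
  let F := omegaSA.lift (φ := φ) lD
    (fun a s => by simp only [lD, AddMonoidHom.compl₂_apply, hDS, map_zero])
    fun a s b => show l (a * φ s) (D b) = l a (D (φ s * b)) by rw [hlmul, D_mul_left]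
  have hF : ∀ a b, F (mkO S A φ a b) = l a (D b) := omegaSA.lift_mkO _ _ _
  refine ⟨F, ⟨fun c a b => by rw [hF, hF, hlmul], fun d a b => ?_, fun a i hi => ?_⟩, ?_⟩
  · rw [hF, hF, hF, hD, hladd, hlmul, hlr, add_sub_cancel_right]
  · rw [hF, ← D_mul_left, hi.1]
  · rintro G ⟨hG_left, -, hG_d⟩
    refine omegaSA.addMonoidHom_ext fun a b => ?_
    obtain ⟨i, hi⟩ := happroxA b
    rw [hF, mkO_eq_mkO_mul_of_mul_eq hi.1, hG_left, hG_d b i hi]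

end CuntzQuillen
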